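/- Let M be a commutative cocommutative bialgebra over R and r an R-valued bicharacter of M. Then the new multiplication a∘b = Σ a'b' r(a''⊗b'') (where Δ(a) = Σa'⊗a'', Δ(b) = Σb'⊗b'') makes the underlying R-module of M into an associative ring with identity 1. -/

import Mathlib

open TensorProduct Coalgebra

/-- An `R`-valued bicharacter of a bialgebra `M` over `R`. -/
structure Bicharacter (R M : Type) [CommRing R] [Ring M] [Bialgebra R M] where
  toFun : M →ₗ[R] M →ₗ[R] R
  one_left : ∀ a : M, toFun 1 a = counit (R := R) a
  one_right : ∀ a : M, toFun a 1 = counit (R := R) a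
  mul_left : ∀ (a b c : M) (ι : Type) (t : Finset ι) (c₁ c₂ : ι → M),
    comul (R := R) c = ∑ i ∈ t, c₁ i ⊗ₜ[R] c₂ i →
    toFun (a * b) c = ∑ i ∈ t, toFun a (c₁ i) * toFun b (c₂ i)
  mul_right : ∀ (a b c : M) (ι : Type) (t : Finset ι) (a₁ a₂ : ι → M),
    comul (R := R) a = ∑ i ∈ t, a₁ i ⊗ₜ[R] a₂ i →
    toFun a (b * c) = ∑ i ∈ t, toFun (a₁ i) b * toFun (a₂ i) c

/-- `mul` is the twisted multiplication `a ∘ b = Σ a'b' r(a''⊗b'')`. -/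
def IsTwistedMul (R M : Type) [CommRing R] [CommRing M] [Bialgebra R M]
    (r : Bicharacter R M) (mul : M →ₗ[R] M →ₗ[R] M) : Prop :=
  ∀ (a b : M) (ι κ : Type) (t : Finset ι) (u : Finset κ)
    (a₁ a₂ : ι → M) (b₁ b₂ : κ → M),
    comul (R := R) a = ∑ i ∈ t, a₁ i ⊗ₜ[R] a₂ i →
    comul (R := R) b = ∑ j ∈ u, b₁ j ⊗ₜ[R] b₂ j →
    mul a b = ∑ i ∈ t, ∑ j ∈ u, r.toFun (a₂ i) (b₂ j) • (a₁ i * b₁ j)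

/-! Write `r.act x c = Σ r(x', c) x''`. Multiplicativity of `r` in its first argument makes
`x ↦ r.act x` an algebra map from `M` into the convolution algebra of `R`-linear maps `M → M`;
multiplicativity in the second argument gives `r.act (r.act x b) c = r.act x (b * c)`; and
coassociativity gives `Δ (r.act x c) = Σ r.act x' c ⊗ x''`. The product
`a ∘ b = Σ b' · r.act a b''` is the convolution `id ⋆ r.act a`, and it is the twisted product
because cocommutativity lets us swap the two legs of `Δ a`. With these rules both `(a ∘ b) ∘ c`
and `a ∘ (b ∘ c)` evaluate to `Σ ((id ⋆ r.act (r.act a b'')) ⋆ r.act b') c`, so associativity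
comes down to associativity of convolution. -/

open WithConv

namespace Bicharacter

section Ring

variable {R M : Type} [CommRing R] [Ring M] [Bialgebra R M]

noncomputable def act (r : Bicharacter R M) : M →ₗ[R] M →ₗ[R] M :=
  TensorProduct.lift (LinearMap.smulRightₗ ∘ₗ r.toFun) ∘ₗ comul

variable {r : Bicharacter R M}

lemma act_apply_of_repr {ι : Type*} {x : M} (𝓡 : Repr R x ι) (c : M) :
    r.act x c = ∑ i ∈ 𝓡.index, r.toFun (𝓡.left i) c • 𝓡.right i := by
  simp [act, ← 𝓡.eq]

lemma act_apply_one (x : M) : r.act x 1 = x := by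
  simp [act_apply_of_repr (ℛ R x), r.one_right, sum_counit_smul]

lemma toConv_act_one : toConv (r.act 1) = 1 := by
  ext c
  simp [act, Algebra.TensorProduct.one_def, r.one_left, Algebra.algebraMap_eq_smul_one]

lemma toConv_act_mul (x y : M) :
    toConv (r.act (x * y)) = toConv (r.act x) * toConv (r.act y) := by
  ext c
  rw [act_apply_of_repr ((ℛ R x).mul (ℛ R y)), (ℛ R c).convMul_apply]
  simp only [Repr.mul_index, Repr.mul_left, Repr.mul_right, Finset.sum_product,
    act_apply_of_repr (ℛ R x), act_apply_of_repr (ℛ R y), Finset.sum_mul_sum,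
    r.mul_left _ _ c _ _ _ _ (ℛ R c).eq.symm, Finset.sum_smul, smul_mul_smul, mul_smul]
  rw [Finset.sum_comm (s := (ℛ R c).index)]
  exact Finset.sum_congr rfl fun _ _ ↦ Finset.sum_comm

lemma comul_act {ι : Type*} {x : M} (𝓡 : Repr R x ι) (c : M) :
    comul (R := R) (r.act x c) = ∑ i ∈ 𝓡.index, r.act (𝓡.left i) c ⊗ₜ[R] 𝓡.right i := by
  have coassoc := congrArg ((TensorProduct.lid R (M ⊗[R] M)).toLinearMap ∘ₗ
      (r.toFun.flip c).rTensor (M ⊗[R] M))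
    (sum_tmul_tmul_eq 𝓡 (fun i ↦ ℛ R (𝓡.left i)) (fun i ↦ ℛ R (𝓡.right i)))
  simp only [map_sum, LinearMap.comp_apply, LinearMap.rTensor_tmul, LinearEquiv.coe_coe,
    TensorProduct.lid_tmul, LinearMap.flip_apply, TensorProduct.smul_tmul'] at coassoc
  rw [act_apply_of_repr 𝓡]
  simp only [act_apply_of_repr (ℛ R _), map_sum, map_smul, ← (ℛ R (𝓡.right _)).eq,
    Finset.smul_sum, TensorProduct.smul_tmul', TensorProduct.sum_tmul]
  exact coassoc.symm

variable (r) in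
noncomputable def actRepr {ι : Type*} {x : M} (𝓡 : Repr R x ι) (c : M) :
    Repr R (r.act x c) ι where
  index := 𝓡.index
  left i := r.act (𝓡.left i) c
  right := 𝓡.right
  eq := (comul_act 𝓡 c).symm

lemma toFun_act (y b c : M) : r.toFun (r.act y b) c = r.toFun y (b * c) := by
  rw [act_apply_of_repr (ℛ R y), r.mul_right y b c _ _ _ _ (ℛ R y).eq.symm]
  simp [map_sum, map_smul]

lemma act_act (x b c : M) : r.act (r.act x b) c = r.act x (b * c) := by
  rw [act_apply_of_repr (r.actRepr (ℛ R x) b)]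
  simp only [actRepr, toFun_act]
  exact (act_apply_of_repr _ _).symm

end Ring

section CommRing

variable {R M : Type} [CommRing R] [CommRing M] [Bialgebra R M]

noncomputable def twistedMul (r : Bicharacter R M) : M →ₗ[R] M →ₗ[R] M :=
  (WithConv.linearEquiv R (M →ₗ[R] M)).toLinearMap ∘ₗ
    LinearMap.mulLeft R (toConv LinearMap.id) ∘ₗ
    (WithConv.linearEquiv R (M →ₗ[R] M)).symm.toLinearMap ∘ₗ r.act

variable {r : Bicharacter R M}

lemma toConv_twistedMul (a : M) :
    toConv (r.twistedMul a) = toConv LinearMap.id * toConv (r.act a) := rfl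

lemma twistedMul_apply_of_repr (a : M) {κ : Type*} {b : M} (𝓡 : Repr R b κ) :
    r.twistedMul a b = ∑ j ∈ 𝓡.index, 𝓡.left j * r.act a (𝓡.right j) :=
  𝓡.convMul_apply _ _

lemma twistedMul_one_left (b : M) : r.twistedMul 1 b = b := by
  have : toConv (r.twistedMul 1) = toConv LinearMap.id := by
    rw [toConv_twistedMul, toConv_act_one, mul_one]
  exact congr($(this) b)

lemma twistedMul_one_right (a : M) : r.twistedMul a 1 = a := by
  simp [twistedMul, Algebra.TensorProduct.one_def, act_apply_one]

lemma twistedMul_mul_right (a y : M) {ι : Type*} {z : M} (𝓡 : Repr R z ι) :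
    r.twistedMul a (y * z) =
      ∑ j ∈ 𝓡.index, r.twistedMul (r.act a (𝓡.right j)) y * 𝓡.left j := by
  rw [twistedMul_apply_of_repr a ((ℛ R y).mul 𝓡)]
  simp only [twistedMul_apply_of_repr _ (ℛ R y), act_act, Finset.sum_mul, Repr.mul_index,
    Repr.mul_left, Repr.mul_right, Finset.sum_product]
  refine Finset.sum_comm.trans (Finset.sum_congr rfl fun j _ ↦ Finset.sum_congr rfl fun i _ ↦ ?_)
  rw [mul_comm (𝓡.right j)]
  ring

lemma twistedMul_assoc (a b c : M) :
    r.twistedMul (r.twistedMul a b) c = r.twistedMul a (r.twistedMul b c) := by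
  let 𝓑 := ℛ R b
  have hab : r.twistedMul a b = ∑ j ∈ 𝓑.index, r.act a (𝓑.right j) * 𝓑.left j := by
    simp only [twistedMul_apply_of_repr a 𝓑, mul_comm]
  have lhs : toConv (r.twistedMul (r.twistedMul a b)) = ∑ j ∈ 𝓑.index,
      toConv (r.twistedMul (r.act a (𝓑.right j))) * toConv (r.act (𝓑.left j)) := by
    simp only [toConv_twistedMul, hab, map_sum, toConv_sum, toConv_act_mul, mul_assoc]
  have rhs : r.twistedMul a (r.twistedMul b c) = ∑ j ∈ 𝓑.index,
      (toConv (r.twistedMul (r.act a (𝓑.right j))) * toConv (r.act (𝓑.left j))) c := by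
    simp only [twistedMul_apply_of_repr b (ℛ R c), map_sum,
      twistedMul_mul_right _ _ (r.actRepr 𝓑 _), (ℛ R c).convMul_apply]
    exact Finset.sum_comm
  rw [rhs, ← LinearMap.sum_apply, ← ofConv_sum, ← lhs]

lemma isTwistedMul_twistedMul [IsCocomm R M] : IsTwistedMul R M r r.twistedMul := by
  intro a b ι κ t u a₁ a₂ b₁ b₂ ha hb
  let 𝓐 : Repr R a ι := ⟨t, a₂, a₁, by rw [← comm_comul R a, ha]; simp [map_sum]⟩
  rw [twistedMul_apply_of_repr a ⟨u, b₁, b₂, hb.symm⟩]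
  simp only [act_apply_of_repr 𝓐, Finset.mul_sum, mul_smul_comm]
  exact Finset.sum_comm.trans
    (Finset.sum_congr rfl fun _ _ ↦ Finset.sum_congr rfl fun _ _ ↦ by rw [mul_comm])

end CommRing

end Bicharacter

theorem twisting_is_ring (R M : Type) [CommRing R] [CommRing M] [Bialgebra R M]
    (hcoc : ∀ a : M, TensorProduct.comm R M M (comul (R := R) a) = comul (R := R) a)
    (r : Bicharacter R M) :
    ∃ mul : M →ₗ[R] M →ₗ[R] M, IsTwistedMul R M r mul ∧
      (∀ a b c : M, mul (mul a b) c = mul a (mul b c)) ∧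
      (∀ a : M, mul 1 a = a) ∧ (∀ a : M, mul a 1 = a) := by
  have : IsCocomm R M := ⟨LinearMap.ext hcoc⟩
  exact ⟨r.twistedMul, Bicharacter.isTwistedMul_twistedMul, Bicharacter.twistedMul_assoc,
    Bicharacter.twistedMul_one_left, Bicharacter.twistedMul_one_right⟩
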